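/- arXiv:1705.01305 — 5 statements merged into one kernel-verified Lean document; each statement's English description precedes it below -/
import Mathlib

section
/- Let assumptions A1 and A2 hold. Then every optimal scoring function has the same MV curve as the density: for every s* ∈ S* and every α ∈ (0,1), MV_{s*}(α) = MV_f(α). -/
open MeasureTheory Set Filter
open scoped ENNReal Topology symmDiff

noncomputable section

/-- The probability distribution on `ℝ^d` with Lebesgue density `f`. -/
def densMeasure {d : ℕ} (f : (Fin d → ℝ) → ℝ) : Measure (Fin d → ℝ) :=
  volume.withDensity fun x => ENNReal.ofReal (f x)

/-- A scoring function: measurable, nonnegative and Lebesgue-integrable. -/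
def IsScoring {d : ℕ} (s : (Fin d → ℝ) → ℝ) : Prop :=
  Measurable s ∧ (∀ x, 0 ≤ s x) ∧ Integrable s volume

/-- The mass `α_s(t) = P(s(X) ≥ t)` of the level set `{s ≥ t}`. -/
def alphaS {d : ℕ} (μ : Measure (Fin d → ℝ)) (s : (Fin d → ℝ) → ℝ) (t : ℝ) : ℝ :=
  (μ {x | t ≤ s x}).toReal

/-- The Lebesgue volume `λ_s(t)` of the level set `{s ≥ t}`. -/
def lamS {d : ℕ} (s : (Fin d → ℝ) → ℝ) (t : ℝ) : ℝ :=
  (volume {x | t ≤ s x}).toReal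

/-- The generalized inverse `α_s⁻¹(α) = inf {t : α_s(t) ≤ α}`. -/
def alphaInv {d : ℕ} (μ : Measure (Fin d → ℝ)) (s : (Fin d → ℝ) → ℝ) (α : ℝ) : ℝ :=
  sInf {t | alphaS μ s t ≤ α}

/-- The Mass Volume curve `MV_s(α) = λ_s(α_s⁻¹(α))`. -/
def MV {d : ℕ} (μ : Measure (Fin d → ℝ)) (s : (Fin d → ℝ) → ℝ) (α : ℝ) : ℝ :=
  lamS s (alphaInv μ s α)

/-- The cumulative distribution function `F_s(t) = P(s(X) ≤ t)`. -/
def cdfS {d : ℕ} (μ : Measure (Fin d → ℝ)) (s : (Fin d → ℝ) → ℝ) (t : ℝ) : ℝ :=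
  (μ {x | s x ≤ t}).toReal

/-- The quantile function `F_s†(u) = inf {t : F_s(t) ≥ u}`. -/
def quantS {d : ℕ} (μ : Measure (Fin d → ℝ)) (s : (Fin d → ℝ) → ℝ) (u : ℝ) : ℝ :=
  sInf {t | u ≤ cdfS μ s t}

/-- The class `S*` of optimal scoring functions. -/
def IsOptimalScoring {d : ℕ} (f s : (Fin d → ℝ) → ℝ) : Prop :=
  IsScoring s ∧
  ∃ (Z : Set (Fin d → ℝ)) (T : ℝ → ℝ),
    MeasurableSet Z ∧
    (∀ y ∈ Set.range f, 0 ≤ T y) ∧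
    volume (Zᶜ ∩ {x | 0 < f x}) = 0 ∧
    (∀ x ∈ Z ∩ {x | 0 < f x}, s x = T (f x)) ∧
    StrictMonoOn T (f '' (Z ∩ {x | 0 < f x})) ∧
    volume {x | ¬ 0 < f x ∧ cdfS (densMeasure f) s (s x) ≠ 0} = 0

/-!
On a set `W ⊆ {f > 0}` carrying all of the Lebesgue measure of `{f > 0}`, `s = T ∘ f` with `T`
strictly increasing, so on `W` a superlevel set `{s ≥ t}` lies between `{f > u}` and `{f ≥ u}`
for `u = inf f(W ∩ {s ≥ t})`. By A2 the level set `{f = u}` is null, and off `{f > 0}` the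
condition `F_s(s) = 0` keeps `s` below every level of positive `F_s`-mass; hence
`{s ≥ t} = {f ≥ u}` Lebesgue-a.e. For `t = α_s⁻¹(α)` this gives `α_f⁻¹(α) ≤ u` and
`P(f(X) ≥ u) ≥ α`, while A2 gives `P(f(X) ≥ α_f⁻¹(α)) ≤ α`. So `{f ≥ α_f⁻¹(α)}` and `{f ≥ u}`
differ by a null set inside the support, and both MV curves take the value `λ(f ≥ u)` at `α`.
-/

section DensityMeasure

variable {d : ℕ} {f : (Fin d → ℝ) → ℝ}

lemma densMeasure_eq_zero_iff (hf : Measurable f) {B : Set (Fin d → ℝ)} :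
    densMeasure f B = 0 ↔ volume ({x | 0 < f x} ∩ B) = 0 := by
  simp only [densMeasure, withDensity_apply_eq_zero' hf.ennreal_ofReal.aemeasurable, ne_eq,
    ENNReal.ofReal_eq_zero, not_le]

lemma volume_eq_zero_of_densMeasure_eq_zero (hf : Measurable f) {B : Set (Fin d → ℝ)}
    (hB : B ⊆ {x | 0 < f x}) (h : densMeasure f B = 0) : volume B = 0 := by
  rwa [densMeasure_eq_zero_iff hf, inter_eq_right.2 hB] at h

lemma ae_densMeasure_pos (hf : Measurable f) : ∀ᵐ x ∂densMeasure f, 0 < f x := by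
  rw [ae_iff, densMeasure_eq_zero_iff hf, ← compl_ofPred, inter_compl_self, measure_empty]

lemma pos_of_densMeasure_lt_one (hf : Measurable f) [IsProbabilityMeasure (densMeasure f)]
    {v : ℝ} (hv : densMeasure f {x | v < f x} < 1) : 0 < v := by
  by_contra! hv₀
  have hfull : densMeasure f {x | 0 < f x} = 1 :=
    (prob_compl_eq_zero_iff (measurableSet_lt measurable_const hf)).1 (ae_densMeasure_pos hf)
  exact hv.not_ge (hfull ▸ measure_mono fun x hx => hv₀.trans_lt hx)

end DensityMeasure

section GeneralizedInverse

variable {d : ℕ} {μ : Measure (Fin d → ℝ)} [IsFiniteMeasure μ] {g : (Fin d → ℝ) → ℝ} {α : ℝ}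

lemma alphaS_le_iff (hα : 0 ≤ α) (t : ℝ) :
    alphaS μ g t ≤ α ↔ μ {x | t ≤ g x} ≤ ENNReal.ofReal α :=
  (ENNReal.le_ofReal_iff_toReal_le (measure_ne_top _ _) hα).symm

lemma nonempty_setOf_alphaS_le (hg : Measurable g) (hα : 0 < α) :
    {t | alphaS μ g t ≤ α}.Nonempty := by
  have hempty : ⋂ n : ℕ, {x | (n : ℝ) ≤ g x} = ∅ :=
    iInter_eq_empty_iff.2 fun x => (exists_nat_gt (g x)).imp fun _ => not_le.2
  have hlim := tendsto_measure_iInter_atTop (μ := μ)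
    (fun n : ℕ => (measurableSet_le measurable_const hg).nullMeasurableSet)
    (fun n m h x (hx : (m : ℝ) ≤ g x) => le_trans (Nat.cast_le.2 h) hx) ⟨0, measure_ne_top _ _⟩
  rw [hempty, measure_empty] at hlim
  obtain ⟨n, hn⟩ := (hlim.eventually (gt_mem_nhds (ENNReal.ofReal_pos.2 hα))).exists
  exact ⟨n, (alphaS_le_iff hα.le _).2 hn.le⟩

lemma bddBelow_setOf_alphaS_le (hα : ENNReal.ofReal α < μ univ) :
    BddBelow {t | alphaS μ g t ≤ α} := by
  have huniv : ⋃ n : ℕ, {x | -(n : ℝ) ≤ g x} = univ :=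
    iUnion_eq_univ_iff.2 fun x => (exists_nat_ge (-g x)).imp fun _ => neg_le.1
  have hlim := tendsto_measure_iUnion_atTop (μ := μ)
    (s := fun n : ℕ => {x | -(n : ℝ) ≤ g x})
    (fun n m h x (hx : -(n : ℝ) ≤ g x) => le_trans (neg_le_neg (Nat.cast_le.2 h)) hx)
  rw [huniv] at hlim
  obtain ⟨n, hn⟩ := (hlim.eventually (lt_mem_nhds hα)).exists
  refine ⟨-n, fun t ht => le_of_not_gt fun htn => ?_⟩
  have hmass : ENNReal.ofReal α < μ {x | t ≤ g x} :=
    hn.trans_le (measure_mono fun x hx => htn.le.trans hx)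
  exact hmass.not_ge ((ENNReal.ofReal_le_ofReal ht).trans_eq'
    (ENNReal.ofReal_toReal (measure_ne_top _ _)))

lemma measure_le_of_alphaInv_lt (hg : Measurable g) (hα : 0 < α) {u : ℝ}
    (hu : alphaInv μ g α < u) : μ {x | u ≤ g x} ≤ ENNReal.ofReal α := by
  obtain ⟨t, ht, htu⟩ := exists_lt_of_csInf_lt (nonempty_setOf_alphaS_le hg hα) hu
  exact (measure_mono fun x hx => htu.le.trans hx).trans ((alphaS_le_iff hα.le t).1 ht)

lemma measure_alphaInv_lt_le (hg : Measurable g) (hα : 0 < α) :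
    μ {x | alphaInv μ g α < g x} ≤ ENNReal.ofReal α := by
  obtain ⟨u, hu_anti, hu_gt, hu_lim⟩ := exists_seq_strictAnti_tendsto (alphaInv μ g α)
  have hunion : {x | alphaInv μ g α < g x} = ⋃ n, {x | u n ≤ g x} := by
    ext x
    simp only [mem_iUnion]
    exact ⟨fun h => (hu_lim.eventually (gt_mem_nhds h)).exists.imp fun _ => le_of_lt,
      fun ⟨n, hn⟩ => (hu_gt n).trans_le hn⟩
  have hmono : Monotone fun n => {x | u n ≤ g x} := fun n m h x hx => (hu_anti.antitone h).trans hx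
  rw [hunion, hmono.measure_iUnion]
  exact iSup_le fun n => measure_le_of_alphaInv_lt hg hα (hu_gt n)

lemma le_measure_alphaInv_le (hg : Measurable g) (hα₀ : 0 < α)
    (hα : ENNReal.ofReal α < μ univ) : ENNReal.ofReal α ≤ μ {x | alphaInv μ g α ≤ g x} := by
  obtain ⟨u, hu_mono, hu_lt, hu_lim⟩ := exists_seq_strictMono_tendsto (alphaInv μ g α)
  have hinter : {x | alphaInv μ g α ≤ g x} = ⋂ n, {x | u n ≤ g x} := by
    ext x
    simp only [mem_iInter]
    exact ⟨fun h n => (hu_lt n).le.trans h, fun h => le_of_tendsto' hu_lim h⟩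
  have hanti : Antitone fun n => {x | u n ≤ g x} := fun n m h x hx => (hu_mono.monotone h).trans hx
  rw [hinter, hanti.measure_iInter
    (fun n => (measurableSet_le measurable_const hg).nullMeasurableSet) ⟨0, measure_ne_top _ _⟩]
  refine le_iInf fun n => le_of_not_ge fun hle => ?_
  exact notMem_of_lt_csInf (hu_lt n) (bddBelow_setOf_alphaS_le hα)
    ((alphaS_le_iff hα₀.le _).2 hle)

lemma alphaInv_le_of_measure_lt_le (hα₀ : 0 < α)
    (hα : ENNReal.ofReal α < μ univ) {v : ℝ} (hv : μ {x | v < g x} ≤ ENNReal.ofReal α) :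
    alphaInv μ g α ≤ v :=
  le_of_forall_gt_imp_ge_of_dense fun u hu => csInf_le (bddBelow_setOf_alphaS_le hα)
    ((alphaS_le_iff hα₀.le u).2 ((measure_mono fun _ hx => hu.trans_le hx).trans hv))

lemma lt_of_cdfS_eq_zero {t r : ℝ} (ht : μ {x | g x ≤ t} ≠ 0) (hr : cdfS μ g r = 0) : r < t := by
  by_contra! htr
  rw [cdfS, ENNReal.toReal_eq_zero_iff] at hr
  exact ht (measure_mono_null (fun _ hx => hx.trans htr) (hr.resolve_right (measure_ne_top _ _)))

end GeneralizedInverse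

lemma exists_superlevel_sandwich {X : Type*} {W : Set X} {f s : X → ℝ} (t : ℝ)
    (hmono : ∀ x ∈ W, ∀ y ∈ W, f x < f y → s x < s y) (hbdd : BddBelow (f '' W))
    (hne : (W ∩ {x | t ≤ s x}).Nonempty) :
    ∃ u, (∀ x ∈ W, t ≤ s x → u ≤ f x) ∧ ∀ x ∈ W, u < f x → t < s x := by
  have hbdd' : BddBelow (f '' (W ∩ {x | t ≤ s x})) := hbdd.mono (image_mono inter_subset_left)
  refine ⟨sInf (f '' (W ∩ {x | t ≤ s x})),
    fun x hx hxt => csInf_le hbdd' ⟨x, ⟨hx, hxt⟩, rfl⟩, fun x hx hlt => ?_⟩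
  obtain ⟨_, ⟨y, ⟨hy, hyt⟩, rfl⟩, hyx⟩ := exists_lt_of_csInf_lt (hne.image f) hlt
  exact hyt.trans_lt (hmono y hy x hx hyx)

section OptimalScoring

variable {d : ℕ} {f s : (Fin d → ℝ) → ℝ}

lemma IsOptimalScoring.exists_strictMono_on_support (hs : IsOptimalScoring f s) :
    ∃ W ⊆ {x | 0 < f x}, (∀ᵐ x, 0 < f x → x ∈ W) ∧
      ∀ x ∈ W, ∀ y ∈ W, f x < f y → s x < s y := by
  obtain ⟨-, Z, T, -, -, hZ, hsT, hT, -⟩ := hs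
  refine ⟨Z ∩ {x | 0 < f x}, inter_subset_right, ?_, fun x hx y hy hxy => ?_⟩
  · filter_upwards [measure_eq_zero_iff_ae_notMem.1 hZ] with x hx hpos
    exact ⟨not_not.1 fun h => hx ⟨h, hpos⟩, hpos⟩
  · rw [hsT x hx, hsT y hy]
    exact hT (mem_image_of_mem f hx) (mem_image_of_mem f hy) hxy

lemma IsOptimalScoring.ae_lt_of_not_pos (hs : IsOptimalScoring f s)
    [IsFiniteMeasure (densMeasure f)] {t : ℝ} (ht : densMeasure f {x | s x ≤ t} ≠ 0) :
    ∀ᵐ x, ¬ 0 < f x → s x < t := by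
  obtain ⟨-, -, -, -, -, -, -, -, hcdf⟩ := hs
  filter_upwards [measure_eq_zero_iff_ae_notMem.1 hcdf] with x hx hpos
  exact lt_of_cdfS_eq_zero ht (not_not.1 fun h => hx ⟨hpos, h⟩)

lemma IsOptimalScoring.exists_superlevel_ae_eq (hs : IsOptimalScoring f s) (hf : Measurable f)
    [IsProbabilityMeasure (densMeasure f)]
    (hA2 : ∀ t > (0:ℝ), densMeasure f {x | f x = t} = 0) {t : ℝ}
    (ht₀ : densMeasure f {x | t ≤ s x} ≠ 0) (ht₁ : densMeasure f {x | t < s x} < 1) :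
    ∃ u, densMeasure f {x | u < f x} ≤ densMeasure f {x | t < s x} ∧
      {x | t ≤ s x} =ᵐ[volume] {x | u ≤ f x} := by
  set μ := densMeasure f
  obtain ⟨W, hW_pos, hW, hmono⟩ := hs.exists_strictMono_on_support
  have hWμ : ∀ᵐ x ∂μ, x ∈ W := by
    filter_upwards [ae_densMeasure_pos hf, (withDensity_absolutelyContinuous _ _).ae_le hW]
      with x hpos hx using hx hpos
  have hne : (W ∩ {x | t ≤ s x}).Nonempty := by
    have hWc : μ Wᶜ = 0 := hWμ
    exact nonempty_of_measure_ne_zero (μ := μ) (by rwa [inter_comm, measure_inter_conull hWc])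
  obtain ⟨u, hsu, hus⟩ := exists_superlevel_sandwich t hmono
    ⟨0, forall_mem_image.2 fun x hx => (hW_pos hx).le⟩ hne
  have hfs : μ {x | u < f x} ≤ μ {x | t < s x} :=
    measure_mono_ae (by filter_upwards [hWμ] with x hx using hus x hx)
  have hu₀ : 0 < u := pos_of_densMeasure_lt_one hf (hfs.trans_lt ht₁)
  have hbelow : μ {x | s x ≤ t} ≠ 0 := by
    have hmeas : MeasurableSet {x | t < s x} := measurableSet_lt measurable_const hs.1.1
    exact fun h => ht₁.ne ((prob_compl_eq_zero_iff hmeas).1 (by simpa only [compl_ofPred, not_lt]))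
  have hu_null : volume {x | f x = u} = 0 :=
    volume_eq_zero_of_densMeasure_eq_zero hf (fun x (hx : f x = u) => hu₀.trans_eq hx.symm)
      (hA2 u hu₀)
  refine ⟨u, hfs, eventuallyEq_set.2 ?_⟩
  filter_upwards [hW, hs.ae_lt_of_not_pos hbelow, measure_eq_zero_iff_ae_notMem.1 hu_null]
    with x hxW hxs hxu
  by_cases hpos : 0 < f x
  · exact ⟨hsu x (hxW hpos), fun h => (hus x (hxW hpos) (h.lt_of_ne' hxu)).le⟩
  · exact iff_of_false (hxs hpos).not_ge fun h => hpos (hu₀.trans_le h)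

end OptimalScoring

lemma volume_superlevel_alphaInv_eq {d : ℕ} {f : (Fin d → ℝ) → ℝ} (hf : Measurable f)
    [IsProbabilityMeasure (densMeasure f)]
    (hA2 : ∀ t > (0:ℝ), densMeasure f {x | f x = t} = 0) {α : ℝ} (hα₀ : 0 < α) (hα₁ : α < 1)
    {u : ℝ} (hu : alphaInv (densMeasure f) f α ≤ u)
    (hmass : ENNReal.ofReal α ≤ densMeasure f {x | u ≤ f x}) :
    volume {x | alphaInv (densMeasure f) f α ≤ f x} = volume {x | u ≤ f x} := by
  set μ := densMeasure f
  set v := alphaInv μ f α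
  have hv_lt : μ {x | v < f x} ≤ ENNReal.ofReal α := measure_alphaInv_lt_le hf hα₀
  have hv₀ : 0 < v := pos_of_densMeasure_lt_one hf (hv_lt.trans_lt (ENNReal.ofReal_lt_one.2 hα₁))
  have hv_le : μ {x | v ≤ f x} ≤ ENNReal.ofReal α := by
    refine (measure_mono_ae ?_).trans hv_lt
    filter_upwards [measure_eq_zero_iff_ae_notMem.1 (hA2 v hv₀)] with x hx h using h.lt_of_ne' hx
  have hsub : {x | u ≤ f x} ⊆ {x | v ≤ f x} := fun x hx => hu.trans hx
  refine (measure_eq_measure_of_null_sdiff hsub (volume_eq_zero_of_densMeasure_eq_zero hf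
    (fun x hx => hv₀.trans_le hx.1) ?_)).symm
  rw [measure_sdiff hsub (measurableSet_le measurable_const hf).nullMeasurableSet
    (measure_ne_top _ _)]
  exact tsub_eq_zero_of_le (hv_le.trans hmass)

theorem optimal_scoring_same_MV_curve_general {d : ℕ} (f : (Fin d → ℝ) → ℝ)
    (hf_meas : Measurable f)
    (hf_prob : IsProbabilityMeasure (densMeasure f))
    (hA2 : ∀ t > (0:ℝ), densMeasure f {x | f x = t} = 0)
    (s : (Fin d → ℝ) → ℝ) (hs : IsOptimalScoring f s) :
    ∀ α ∈ Ioo (0:ℝ) 1, MV (densMeasure f) s α = MV (densMeasure f) f α := by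
  rintro α ⟨hα₀, hα₁⟩
  set μ := densMeasure f
  have hαμ : ENNReal.ofReal α < μ univ := by rwa [measure_univ, ENNReal.ofReal_lt_one]
  have hs_mass : ENNReal.ofReal α ≤ μ {x | alphaInv μ s α ≤ s x} :=
    le_measure_alphaInv_le hs.1.1 hα₀ hαμ
  have hs_tail : μ {x | alphaInv μ s α < s x} ≤ ENNReal.ofReal α :=
    measure_alphaInv_lt_le hs.1.1 hα₀
  obtain ⟨u, hfs, hae⟩ := hs.exists_superlevel_ae_eq hf_meas hA2
    ((ENNReal.ofReal_pos.2 hα₀).trans_le hs_mass).ne'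
    (hs_tail.trans_lt (ENNReal.ofReal_lt_one.2 hα₁))
  have hu : alphaInv μ f α ≤ u := alphaInv_le_of_measure_lt_le hα₀ hαμ (hfs.trans hs_tail)
  have hmass : ENNReal.ofReal α ≤ μ {x | u ≤ f x} :=
    hs_mass.trans_eq (measure_congr ((withDensity_absolutelyContinuous _ _).ae_eq hae))
  rw [MV, MV, lamS, lamS, measure_congr hae,
    volume_superlevel_alphaInv_eq hf_meas hA2 hα₀ hα₁ hu hmass]

/-- every optimal scoring function has the same MV curve as the density `f`. -/
theorem optimal_scoring_same_MV_curve {d : ℕ} (f : (Fin d → ℝ) → ℝ)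
    (hf_meas : Measurable f) (hf_nonneg : ∀ x, 0 ≤ f x)
    (hf_prob : IsProbabilityMeasure (densMeasure f))
    (hA1 : ∃ B, ∀ x, f x ≤ B)
    (hA2 : ∀ t > (0:ℝ), densMeasure f {x | f x = t} = 0)
    (s : (Fin d → ℝ) → ℝ) (hs : IsOptimalScoring f s) :
    ∀ α ∈ Ioo (0:ℝ) 1, MV (densMeasure f) s α = MV (densMeasure f) f α :=
  optimal_scoring_same_MV_curve_general f hf_meas hf_prob hA2 s hs
end
end

section
/- Let assumptions A1 and A2 hold. Then for every scoring function s and every α ∈ (0,1), the pointwise excess of its MV curve over the optimal one is controlled by a symmetric difference of level sets: MV_s(α) − MV*(α) ≤ λ(Ω*_α Δ Ω_{s,Q(s,α)}), where Δ denotes the symmetric difference. -/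
open MeasureTheory Set Filter
open scoped ENNReal Topology symmDiff

noncomputable section

/-!
`P(s(X) ≥ t) ≤ α` says `P(s(X) < t) ≥ 1 - α`, and the left-continuous version of a cdf has the
same generalized inverse as the cdf, so `α_s⁻¹(α) = Q(s,α)` for every measurable `s`. Hence
`MV_s(α) = λ(B)` and `MV*(α) = λ(A)` for the two level sets `A = Ω*_α`, `B = Ω_{s,Q(s,α)}`, and
`λ(B) ≤ λ(A) + λ(A Δ B)`. The volume of `A` is finite by Markov's inequality, because `f(X) > 0`
almost surely forces `Q*(α) > 0`.
-/

open ProbabilityTheory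

theorem Real.sInf_eq_sInf_of_subset_of_subset_closure {s t : Set ℝ} (hst : s ⊆ t)
    (hts : t ⊆ closure s) : sInf s = sInf t := by
  by_cases hs : s.Nonempty ∧ BddBelow s
  · exact (((isGLB_iff_of_subset_of_subset_closure hst hts).1
      (isGLB_csInf hs.1 hs.2)).csInf_eq (hs.1.mono hst)).symm
  rcases s.eq_empty_or_nonempty with rfl | hne
  · rw [closure_empty, subset_empty_iff] at hts
    rw [hts]
  · have hunb : ¬BddBelow s := fun h => hs ⟨hne, h⟩
    rw [Real.sInf_of_not_bddBelow hunb, Real.sInf_of_not_bddBelow (mt (BddBelow.mono hst) hunb)]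

namespace MeasureTheory

variable {Ω : Type*} [MeasurableSpace Ω] {μ : Measure Ω}

theorem measureReal_sub_measureReal_le_measureReal_symmDiff {s t : Set Ω} (hs : μ s ≠ ∞) :
    μ.real t - μ.real s ≤ μ.real (s ∆ t) := by
  have := measureReal_symmDiff_le (μ := μ) (s := ∅) (t := s) t (by simp) hs
  simp only [← bot_eq_empty, bot_symmDiff] at this
  linarith

theorem meas_ge_ne_top_of_lintegral_ofReal_ne_top {g : Ω → ℝ} (hg : AEMeasurable g μ)
    (hint : ∫⁻ x, ENNReal.ofReal (g x) ∂μ ≠ ∞) {c : ℝ} (hc : 0 < c) :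
    μ {x | c ≤ g x} ≠ ∞ := by
  refine ne_top_of_le_ne_top (ENNReal.div_ne_top hint (by simpa using hc))
    ((measure_mono fun x hx => ENNReal.ofReal_le_ofReal hx).trans
      (meas_ge_le_lintegral_div hg.ennreal_ofReal (by simpa using hc) ENNReal.ofReal_ne_top))

end MeasureTheory

theorem ProbabilityTheory.zero_lt_sInf_setOf_le_cdf {ν : Measure ℝ} [IsProbabilityMeasure ν]
    (h0 : ν (Iic 0) = 0) {u : ℝ} (hu0 : 0 < u) (hu1 : u < 1) :
    0 < sInf {t | u ≤ cdf ν t} := by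
  have hcdf0 : cdf ν 0 = 0 := by simp [cdf_eq_real, measureReal_def, h0]
  obtain ⟨ε, hε, hεu⟩ : ∃ ε > 0, cdf ν ε < u := by
    have hright := ((cdf ν).right_continuous 0).mono (Ioi_subset_Ici_self (a := (0 : ℝ)))
    rw [ContinuousWithinAt, hcdf0] at hright
    exact ((hright.eventually (gt_mem_nhds hu0)).and self_mem_nhdsWithin).exists.imp
      fun ε h => ⟨h.2, h.1⟩
  have hne : {t | u ≤ cdf ν t}.Nonempty :=
    ((tendsto_cdf_atTop ν).eventually (lt_mem_nhds hu1)).exists.imp fun _ h => h.le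
  refine hε.trans_le (le_csInf hne fun t (ht : u ≤ cdf ν t) => ?_)
  by_contra! htε
  exact (hεu.trans_le ht).not_ge (monotone_cdf ν htε.le)

section LevelSets

variable {d : ℕ} {μ : Measure (Fin d → ℝ)} [IsProbabilityMeasure μ] {g : (Fin d → ℝ) → ℝ}

theorem cdfS_eq_cdf_map (hg : Measurable g) (t : ℝ) : cdfS μ g t = cdf (μ.map g) t := by
  have := Measure.isProbabilityMeasure_map (μ := μ) hg.aemeasurable
  rw [cdf_eq_real, map_measureReal_apply hg measurableSet_Iic]
  rfl

theorem alphaInv_eq_quantS (hg : Measurable g) (α : ℝ) :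
    alphaInv μ g α = quantS μ g (1 - α) := by
  refine Real.sInf_eq_sInf_of_subset_of_subset_closure (fun t (ht : alphaS μ g t ≤ α) => ?_)
    fun t (ht : 1 - α ≤ cdfS μ g t) => ?_
  · have hlt : μ.real {x | g x < t} ≤ cdfS μ g t :=
      measureReal_mono fun x (hx : g x < t) => hx.le
    rw [alphaS, show {x | t ≤ g x} = {x | g x < t}ᶜ by ext; simp, ← measureReal_def,
      probReal_compl_eq_one_sub (measurableSet_lt hg measurable_const)] at ht
    show 1 - α ≤ cdfS μ g t
    linarith
  · refine closure_mono (s := Ioi t) (fun t' (ht' : t < t') => ?_) (by simp)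
    have hle : alphaS μ g t' ≤ μ.real {x | g x ≤ t}ᶜ :=
      measureReal_mono fun x (hx : t' ≤ g x) => (ht'.trans_le hx).not_ge
    rw [probReal_compl_eq_one_sub (measurableSet_le hg measurable_const)] at hle
    change 1 - α ≤ μ.real {x | g x ≤ t} at ht
    show alphaS μ g t' ≤ α
    linarith

theorem MV_eq_lamS_quantS (hg : Measurable g) (α : ℝ) :
    MV μ g α = lamS g (quantS μ g (1 - α)) := by
  rw [MV, alphaInv_eq_quantS hg]

end LevelSets

theorem volume_setOf_le_ne_top_of_densMeasure {d : ℕ} {f : (Fin d → ℝ) → ℝ} (hf : Measurable f)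
    [IsProbabilityMeasure (densMeasure f)] {c : ℝ} (hc : 0 < c) :
    volume {x | c ≤ f x} ≠ ∞ := by
  have hint := measure_univ (μ := densMeasure f)
  rw [densMeasure, withDensity_apply _ MeasurableSet.univ, setLIntegral_univ] at hint
  exact meas_ge_ne_top_of_lintegral_ofReal_ne_top hf.aemeasurable (hint ▸ ENNReal.one_ne_top) hc

theorem densMeasure_setOf_le_zero {d : ℕ} {f : (Fin d → ℝ) → ℝ} (hf : Measurable f) :
    densMeasure f {x | f x ≤ 0} = 0 := by
  have hmeas : MeasurableSet {x | f x ≤ 0} := measurableSet_le hf measurable_const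
  rw [densMeasure, withDensity_apply _ hmeas]
  exact (setLIntegral_congr_fun hmeas
    fun x (hx : f x ≤ 0) => ENNReal.ofReal_eq_zero.2 hx).trans lintegral_zero

theorem zero_lt_quantS_densMeasure {d : ℕ} {f : (Fin d → ℝ) → ℝ} (hf : Measurable f)
    [IsProbabilityMeasure (densMeasure f)] {u : ℝ} (hu0 : 0 < u) (hu1 : u < 1) :
    0 < quantS (densMeasure f) f u := by
  have := Measure.isProbabilityMeasure_map (μ := densMeasure f) hf.aemeasurable
  simp only [quantS, cdfS_eq_cdf_map hf]
  refine zero_lt_sInf_setOf_le_cdf ?_ hu0 hu1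
  rw [Measure.map_apply hf measurableSet_Iic]
  exact densMeasure_setOf_le_zero hf

theorem MV_excess_le_symmDiff_general {d : ℕ} (f : (Fin d → ℝ) → ℝ)
    (hf_meas : Measurable f)
    (hf_prob : IsProbabilityMeasure (densMeasure f))
    (s : (Fin d → ℝ) → ℝ) (hs : IsScoring s) :
    ∀ α ∈ Ioo (0:ℝ) 1,
      MV (densMeasure f) s α - MV (densMeasure f) f α ≤
        (volume ({x | quantS (densMeasure f) f (1 - α) ≤ f x} ∆
                 {x | quantS (densMeasure f) s (1 - α) ≤ s x})).toReal := by
  rintro α ⟨hα0, hα1⟩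
  rw [MV_eq_lamS_quantS hs.1, MV_eq_lamS_quantS hf_meas]
  exact measureReal_sub_measureReal_le_measureReal_symmDiff
    (volume_setOf_le_ne_top_of_densMeasure hf_meas
      (zero_lt_quantS_densMeasure hf_meas (by linarith) (by linarith)))

/-- the pointwise excess of the MV curve of `s` over the optimal one is
bounded by the volume of the symmetric difference of the corresponding level sets,
`MV_s(α) − MV*(α) ≤ λ(Ω*_α Δ Ω_{s,Q(s,α)})` with `Q(s,α) = F_s†(1−α)` and
`Ω*_α = {x : f(x) ≥ Q*(α)}`. -/
theorem MV_excess_le_symmDiff {d : ℕ} (f : (Fin d → ℝ) → ℝ)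
    (hf_meas : Measurable f) (hf_nonneg : ∀ x, 0 ≤ f x)
    (hf_prob : IsProbabilityMeasure (densMeasure f))
    (hA1 : ∃ B, ∀ x, f x ≤ B)
    (hA2 : ∀ t > (0:ℝ), densMeasure f {x | f x = t} = 0)
    (s : (Fin d → ℝ) → ℝ) (hs : IsScoring s) :
    ∀ α ∈ Ioo (0:ℝ) 1,
      MV (densMeasure f) s α - MV (densMeasure f) f α ≤
        (volume ({x | quantS (densMeasure f) f (1 - α) ≤ f x} ∆
                 {x | quantS (densMeasure f) s (1 - α) ≤ s x})).toReal :=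
  MV_excess_le_symmDiff_general f hf_meas hf_prob s hs
end
end

section
/- Let assumptions A1 and A2 hold. Since f is bounded, the optimal curve MV* is defined on [0,1) (with MV*(0) = 0), and the map α ∈ [0,1) ↦ MV*(α) is convex. -/
/-!
On the shell `{r ≤ f < t}` the density lies between `r` and `t`, so the mass and volume increments
of the superlevel sets of `f` satisfy `r (λ(r) - λ(t)) ≤ α(r) - α(t) ≤ t (λ(r) - λ(t))` for
`0 < r ≤ t`. Assumption A2 makes `t ↦ α_f(t)` continuous at positive levels, and boundedness of
`f` together with `P(f(X) > 0) = 1` puts `α_f⁻¹(α)` in `(0, ∞)` for `α ∈ [0, 1)`, so that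
`α_f(α_f⁻¹(α)) = α`. For `x < y < z` in `[0, 1)`, taking `r` or `t` to be the level
`α_f⁻¹(y)` shows that the slope of `MV*` on `[x, y]` is at most `1 / α_f⁻¹(y)`, which is at most
its slope on `[y, z]`. Finally `MV*(0) = 0` since a null superlevel set at a positive level has
volume zero.
-/

open MeasureTheory Set Filter
open scoped ENNReal Topology symmDiff

noncomputable section

section LevelSets

variable {d : ℕ} {μ : Measure (Fin d → ℝ)} {s : (Fin d → ℝ) → ℝ}

theorem alphaS_antitone [IsFiniteMeasure μ] : Antitone (alphaS μ s) :=
  fun _ _ hrt => measureReal_mono fun _ hx => le_trans hrt hx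

theorem alphaS_sub_alphaS [IsFiniteMeasure μ] (hs : Measurable s) {r t : ℝ} (hrt : r ≤ t) :
    alphaS μ s r - alphaS μ s t = μ.real ({x | r ≤ s x} \ {x | t ≤ s x}) :=
  (measureReal_sdiff (fun _ hx => le_trans hrt hx) (measurableSet_le measurable_const hs)).symm

theorem lamS_sub_lamS (hs : Measurable s) {r t : ℝ} (hrt : r ≤ t)
    (hfin : volume {x | r ≤ s x} ≠ ∞) :
    lamS s r - lamS s t = volume.real ({x | r ≤ s x} \ {x | t ≤ s x}) :=
  (measureReal_sdiff (fun _ hx => le_trans hrt hx) (measurableSet_le measurable_const hs) hfin).symm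

theorem le_alphaS_of_forall_lt [IsFiniteMeasure μ] (hs : Measurable s) {t a : ℝ}
    (h : ∀ r < t, a ≤ alphaS μ s r) : a ≤ alphaS μ s t := by
  obtain ⟨u, hu_mono, hu_lt, hu_lim⟩ := exists_seq_strictMono_tendsto t
  have hsets : {x | t ≤ s x} = ⋂ n, {x | u n ≤ s x} := by
    ext x
    simp only [mem_ofPred_eq, mem_iInter]
    exact ⟨fun hx n => (hu_lt n).le.trans hx, fun hx => le_of_tendsto' hu_lim hx⟩
  have hlim : Tendsto (fun n => alphaS μ s (u n)) atTop (𝓝 (alphaS μ s t)) := by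
    rw [alphaS, hsets]
    exact (ENNReal.tendsto_toReal (measure_ne_top _ _)).comp
      (tendsto_measure_iInter_atTop (fun n => (measurableSet_le measurable_const hs).nullMeasurableSet)
        (fun i j hij x hx => (hu_mono.monotone hij).trans hx) ⟨0, measure_ne_top _ _⟩)
  exact ge_of_tendsto' hlim fun n => h _ (hu_lt n)

theorem measureReal_lt_le_of_forall_gt [IsFiniteMeasure μ] {t a : ℝ}
    (h : ∀ r > t, alphaS μ s r ≤ a) : μ.real {x | t < s x} ≤ a := by
  obtain ⟨u, hu_anti, hu_gt, hu_lim⟩ := exists_seq_strictAnti_tendsto t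
  have hsets : {x | t < s x} = ⋃ n, {x | u n ≤ s x} := by
    change s ⁻¹' Ioi t = _
    rw [← iUnion_Ici_eq_Ioi_of_lt_of_tendsto hu_gt hu_lim, preimage_iUnion]
    rfl
  have hlim : Tendsto (fun n => alphaS μ s (u n)) atTop (𝓝 (μ.real {x | t < s x})) := by
    rw [hsets]
    exact (ENNReal.tendsto_toReal (measure_ne_top _ _)).comp
      (tendsto_measure_iUnion_atTop fun i j hij x hx => (hu_anti.antitone hij).trans hx)
  exact le_of_tendsto' hlim fun n => h _ (hu_gt n)

theorem exists_pos_lt_alphaS [IsFiniteMeasure μ] (hpos : μ {x | s x ≤ 0} = 0) {a : ℝ}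
    (ha : a < μ.real univ) : ∃ ε > 0, a < alphaS μ s ε := by
  by_contra! h
  have hfull : μ.real {x | 0 < s x} = μ.real univ := by
    refine measureReal_congr (ae_eq_univ.2 ?_)
    simpa only [compl_ofPred, not_lt] using hpos
  exact ha.not_ge (hfull ▸ measureReal_lt_le_of_forall_gt h)

theorem nonempty_setOf_alphaS_le_s4 {B a : ℝ} (hB : ∀ x, s x ≤ B) (ha : 0 ≤ a) :
    {t | alphaS μ s t ≤ a}.Nonempty := by
  have hempty : {x | B + 1 ≤ s x} = ∅ :=
    eq_empty_of_forall_notMem fun x hx => (hB x).not_gt ((lt_add_one B).trans_le hx)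
  exact ⟨B + 1, by simpa [alphaS, hempty] using ha⟩

theorem mem_lowerBounds_of_lt_alphaS [IsFiniteMeasure μ] {a ε : ℝ} (hε : a < alphaS μ s ε) :
    ε ∈ lowerBounds {t | alphaS μ s t ≤ a} :=
  fun _ ht => le_of_not_gt fun hlt => (alphaS_antitone hlt.le |>.trans ht).not_gt hε

theorem alphaS_alphaInv [IsFiniteMeasure μ] (hs : Measurable s) {a : ℝ}
    (hne : {t | alphaS μ s t ≤ a}.Nonempty) (hbdd : BddBelow {t | alphaS μ s t ≤ a})
    (hatom : μ {x | s x = alphaInv μ s a} = 0) :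
    alphaS μ s (alphaInv μ s a) = a := by
  refine le_antisymm ?_ (le_alphaS_of_forall_lt hs fun r hr => ?_)
  · set T := alphaInv μ s a
    have hsplit : {x | T ≤ s x} ⊆ {x | T < s x} ∪ {x | s x = T} := fun x hx =>
      (eq_or_lt_of_le (show T ≤ s x from hx)).symm.imp id Eq.symm
    calc alphaS μ s T ≤ μ.real ({x | T < s x} ∪ {x | s x = T}) := measureReal_mono hsplit
      _ ≤ μ.real {x | T < s x} + μ.real {x | s x = T} := measureReal_union_le _ _
      _ = μ.real {x | T < s x} := by simp [measureReal_def, hatom]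
      _ ≤ a := measureReal_lt_le_of_forall_gt fun r hr => by
        obtain ⟨u, hu, hur⟩ := (csInf_lt_iff hbdd hne).1 hr
        exact (alphaS_antitone hur.le).trans hu
  · exact (not_le.1 (notMem_of_lt_csInf (s := {t | alphaS μ s t ≤ a}) hr hbdd)).le

end LevelSets

section Density

variable {d : ℕ} {f : (Fin d → ℝ) → ℝ}

theorem densMeasure_setOf_nonpos (hf : Measurable f) : densMeasure f {x | f x ≤ 0} = 0 := by
  rw [densMeasure, withDensity_apply_eq_zero' (by fun_prop)]
  convert measure_empty (μ := (volume : Measure (Fin d → ℝ)))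
  ext x
  simp [ENNReal.ofReal_eq_zero]

theorem ofReal_mul_volume_le_densMeasure (hf : Measurable f) {t : ℝ} {E : Set (Fin d → ℝ)}
    (hE : MeasurableSet E) (h : ∀ x ∈ E, t ≤ f x) :
    ENNReal.ofReal t * volume E ≤ densMeasure f E := by
  rw [densMeasure, withDensity_apply _ hE, ← setLIntegral_const]
  exact setLIntegral_mono (ENNReal.measurable_ofReal.comp hf) fun x hx =>
    ENNReal.ofReal_le_ofReal (h x hx)

theorem densMeasure_le_ofReal_mul_volume {t : ℝ} {E : Set (Fin d → ℝ)}
    (hE : MeasurableSet E) (h : ∀ x ∈ E, f x ≤ t) :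
    densMeasure f E ≤ ENNReal.ofReal t * volume E := by
  rw [densMeasure, withDensity_apply _ hE, ← setLIntegral_const]
  exact setLIntegral_mono measurable_const fun x hx => ENNReal.ofReal_le_ofReal (h x hx)

theorem mul_measureReal_le_densMeasure_real (hf : Measurable f) [IsFiniteMeasure (densMeasure f)]
    {t : ℝ} {E : Set (Fin d → ℝ)} (hE : MeasurableSet E) (ht : 0 ≤ t) (h : ∀ x ∈ E, t ≤ f x) :
    t * volume.real E ≤ (densMeasure f).real E := by
  simpa only [measureReal_def, ENNReal.toReal_mul, ENNReal.toReal_ofReal ht] using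
    ENNReal.toReal_mono (measure_ne_top _ _) (ofReal_mul_volume_le_densMeasure hf hE h)

theorem densMeasure_real_le_mul_measureReal {t : ℝ} {E : Set (Fin d → ℝ)}
    (hE : MeasurableSet E) (ht : 0 ≤ t) (hfin : volume E ≠ ∞) (h : ∀ x ∈ E, f x ≤ t) :
    (densMeasure f).real E ≤ t * volume.real E := by
  simpa only [measureReal_def, ENNReal.toReal_mul, ENNReal.toReal_ofReal ht] using
    ENNReal.toReal_mono (ENNReal.mul_ne_top ENNReal.ofReal_ne_top hfin)
      (densMeasure_le_ofReal_mul_volume hE h)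

theorem volume_setOf_le_ne_top (hf : Measurable f) [IsFiniteMeasure (densMeasure f)] {t : ℝ}
    (ht : 0 < t) : volume {x | t ≤ f x} ≠ ∞ := by
  intro hv
  have h := ofReal_mul_volume_le_densMeasure hf (measurableSet_le measurable_const hf)
    (fun x (hx : t ≤ f x) => hx)
  rw [hv, ENNReal.mul_top (ENNReal.ofReal_pos.2 ht).ne'] at h
  exact measure_ne_top _ _ (top_le_iff.1 h)

theorem lamS_eq_zero_of_alphaS_eq_zero (hf : Measurable f) [IsFiniteMeasure (densMeasure f)]
    {t : ℝ} (ht : 0 < t) (h : alphaS (densMeasure f) f t = 0) : lamS f t = 0 := by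
  have hle := mul_measureReal_le_densMeasure_real hf (measurableSet_le measurable_const hf) ht.le
    (fun x (hx : t ≤ f x) => hx)
  change t * lamS f t ≤ alphaS (densMeasure f) f t at hle
  rw [h] at hle
  exact le_antisymm (nonpos_of_mul_nonpos_right hle ht) measureReal_nonneg

theorem mul_lamS_sub_le_alphaS_sub (hf : Measurable f) [IsFiniteMeasure (densMeasure f)]
    {r t : ℝ} (hr : 0 < r) (hrt : r ≤ t) :
    r * (lamS f r - lamS f t) ≤ alphaS (densMeasure f) f r - alphaS (densMeasure f) f t := by
  rw [lamS_sub_lamS hf hrt (volume_setOf_le_ne_top hf hr), alphaS_sub_alphaS hf hrt]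
  exact mul_measureReal_le_densMeasure_real hf
    ((measurableSet_le measurable_const hf).diff (measurableSet_le measurable_const hf)) hr.le
    fun x hx => hx.1

theorem alphaS_sub_le_mul_lamS_sub (hf : Measurable f) [IsFiniteMeasure (densMeasure f)]
    {r t : ℝ} (hr : 0 < r) (hrt : r ≤ t) :
    alphaS (densMeasure f) f r - alphaS (densMeasure f) f t ≤ t * (lamS f r - lamS f t) := by
  have hfin := volume_setOf_le_ne_top hf hr
  rw [lamS_sub_lamS hf hrt hfin, alphaS_sub_alphaS hf hrt]
  exact densMeasure_real_le_mul_measureReal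
    ((measurableSet_le measurable_const hf).diff (measurableSet_le measurable_const hf))
    (hr.le.trans hrt) (measure_ne_top_of_subset sdiff_subset hfin) fun x hx => (not_le.1 hx.2).le

theorem alphaInv_pos_and_alphaS_alphaInv (hf : Measurable f)
    [IsProbabilityMeasure (densMeasure f)] (hbound : ∃ B, ∀ x, f x ≤ B)
    (hatom : ∀ t > (0 : ℝ), densMeasure f {x | f x = t} = 0) {a : ℝ} (ha : a ∈ Ico (0 : ℝ) 1) :
    0 < alphaInv (densMeasure f) f a ∧
      alphaS (densMeasure f) f (alphaInv (densMeasure f) f a) = a := by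
  obtain ⟨B, hB⟩ := hbound
  have hne := nonempty_setOf_alphaS_le_s4 (μ := densMeasure f) hB ha.1
  obtain ⟨ε, hε, hεa⟩ := exists_pos_lt_alphaS (densMeasure_setOf_nonpos hf)
    (ha.2.trans_eq probReal_univ.symm)
  have hpos : 0 < alphaInv (densMeasure f) f a :=
    hε.trans_le (le_csInf hne (mem_lowerBounds_of_lt_alphaS hεa))
  exact ⟨hpos, alphaS_alphaInv hf hne ⟨ε, mem_lowerBounds_of_lt_alphaS hεa⟩ (hatom _ hpos)⟩

theorem alphaInv_antitoneOn (hf : Measurable f) [IsProbabilityMeasure (densMeasure f)]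
    (hbound : ∃ B, ∀ x, f x ≤ B) :
    AntitoneOn (alphaInv (densMeasure f) f) (Ico (0 : ℝ) 1) := by
  intro a ha b hb hab
  obtain ⟨B, hB⟩ := hbound
  obtain ⟨ε, -, hεb⟩ := exists_pos_lt_alphaS (densMeasure_setOf_nonpos hf)
    (hb.2.trans_eq probReal_univ.symm)
  exact csInf_le_csInf ⟨ε, mem_lowerBounds_of_lt_alphaS hεb⟩
    (nonempty_setOf_alphaS_le_s4 hB ha.1) fun t ht => le_trans ht hab

theorem MV_slope_mono_adjacent (hf : Measurable f) [IsProbabilityMeasure (densMeasure f)]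
    (hbound : ∃ B, ∀ x, f x ≤ B) (hatom : ∀ t > (0 : ℝ), densMeasure f {x | f x = t} = 0)
    {x y z : ℝ} (hx : 0 ≤ x) (hz : z < 1) (hxy : x < y) (hyz : y < z) :
    (MV (densMeasure f) f y - MV (densMeasure f) f x) / (y - x) ≤
      (MV (densMeasure f) f z - MV (densMeasure f) f y) / (z - y) := by
  have hxI : x ∈ Ico (0 : ℝ) 1 := ⟨hx, hxy.trans (hyz.trans hz)⟩
  have hyI : y ∈ Ico (0 : ℝ) 1 := ⟨hx.trans hxy.le, hyz.trans hz⟩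
  have hzI : z ∈ Ico (0 : ℝ) 1 := ⟨hyI.1.trans hyz.le, hz⟩
  obtain ⟨-, hαx⟩ := alphaInv_pos_and_alphaS_alphaInv hf hbound hatom hxI
  obtain ⟨hty, hαy⟩ := alphaInv_pos_and_alphaS_alphaInv hf hbound hatom hyI
  obtain ⟨htz, hαz⟩ := alphaInv_pos_and_alphaS_alphaInv hf hbound hatom hzI
  have hleft := mul_lamS_sub_le_alphaS_sub hf hty
    (alphaInv_antitoneOn hf hbound hxI hyI hxy.le)
  have hright := alphaS_sub_le_mul_lamS_sub hf htz
    (alphaInv_antitoneOn hf hbound hyI hzI hyz.le)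
  rw [hαx, hαy] at hleft
  rw [hαy, hαz] at hright
  unfold MV
  rw [div_le_div_iff₀ (sub_pos.2 hxy) (sub_pos.2 hyz)]
  nlinarith [mul_le_mul_of_nonneg_right hleft (sub_pos.2 hyz).le,
    mul_le_mul_of_nonneg_right hright (sub_pos.2 hxy).le]

end Density

theorem optimal_MV_curve_convex_general {d : ℕ} (f : (Fin d → ℝ) → ℝ)
    (hf_meas : Measurable f)
    (hf_prob : IsProbabilityMeasure (densMeasure f))
    (hA1 : ∃ B, ∀ x, f x ≤ B)
    (hA2 : ∀ t > (0:ℝ), densMeasure f {x | f x = t} = 0) :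
    MV (densMeasure f) f 0 = 0 ∧ ConvexOn ℝ (Ico (0:ℝ) 1) (MV (densMeasure f) f) := by
  obtain ⟨hpos, hzero⟩ :=
    alphaInv_pos_and_alphaS_alphaInv hf_meas hA1 hA2 (left_mem_Ico.2 zero_lt_one)
  exact ⟨lamS_eq_zero_of_alphaS_eq_zero hf_meas hpos hzero,
    convexOn_of_slope_mono_adjacent (convex_Ico 0 1) fun hx hz hxy hyz =>
      MV_slope_mono_adjacent hf_meas hA1 hA2 hx.1 hz.2 hxy hyz⟩

/-- under A1 and A2, the optimal MV curve is defined on `[0,1)` with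
`MV*(0) = 0` and is convex on `[0,1)`. -/
theorem optimal_MV_curve_convex {d : ℕ} (f : (Fin d → ℝ) → ℝ)
    (hf_meas : Measurable f) (hf_nonneg : ∀ x, 0 ≤ f x)
    (hf_prob : IsProbabilityMeasure (densMeasure f))
    (hA1 : ∃ B, ∀ x, f x ≤ B)
    (hA2 : ∀ t > (0:ℝ), densMeasure f {x | f x = t} = 0) :
    MV (densMeasure f) f 0 = 0 ∧ ConvexOn ℝ (Ico (0:ℝ) 1) (MV (densMeasure f) f) :=
  optimal_MV_curve_convex_general f hf_meas hf_prob hA1 hA2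
end
end

section
/- Let f be a probability density on ℝ^d (with respect to Lebesgue measure λ) satisfying assumption A2, let F_f be the cumulative distribution function of f(X) where X has density f, and let supp(f) = {x : f(x) > 0} and Z_f = {x : F_f(f(x)) > 0}. Then λ(supp(f) Δ Z_f) = 0, i.e. the support of the density equals {x : F_f(f(x)) > 0} up to a set of Lebesgue measure zero. -/
open MeasureTheory Set Filter
open scoped ENNReal Topology symmDiff

noncomputable section

/-! The levels `t` with `P(f(X) ≤ t) = 0` form a lower set of `ℝ`, so the points `x` with
`P(f(X) ≤ f x) = 0` are covered by a monotone family of null sets `{f ≤ t}`; continuity from below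
(along a countably generated `atTop`) makes this cover null for the law of `X`. Inside `{f > 0}`
null sets for the law of `X` are Lebesgue-null. Conversely `F_f(f x) > 0` forces `f x > 0`, since
`P(f(X) ≤ 0) = 0`. -/

theorem measure_setOf_measure_le_eq_zero {α β : Type*} [MeasurableSpace α] [LinearOrder β]
    [TopologicalSpace β] [OrderTopology β] [SecondCountableTopology β]
    (μ : Measure α) (Y : α → β) :
    μ {x | μ {y | Y y ≤ Y x} = 0} = 0 := by
  set I : Set β := {t | μ {y | Y y ≤ t} = 0}
  have hI : IsLowerSet I := fun _ _ hle hb => measure_mono_null (fun _ hy => le_trans hy hle) hb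
  -- an order-connected subset of `β` carries the order topology, so its `atTop` is countably
  -- generated and continuity from below applies to the uncountable union
  have := hI.ordConnected
  have hmono : Monotone fun t : I => {y | Y y ≤ t} := fun _ _ hst _ hy => le_trans hy hst
  have hcover : {x | μ {y | Y y ≤ Y x} = 0} = ⋃ t : I, {y | Y y ≤ t} := by
    ext x
    simp only [mem_ofPred_eq, mem_iUnion, Subtype.exists, exists_prop]
    exact ⟨fun hx => ⟨Y x, hx, le_rfl⟩, fun ⟨t, ht, hxt⟩ => hI hxt ht⟩
  rw [hcover, hmono.measure_iUnion, ENNReal.iSup_eq_zero]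
  exact fun t => t.2

theorem withDensity_ofReal_apply_eq_zero {α : Type*} [MeasurableSpace α] {μ : Measure α}
    {f : α → ℝ} (hf : AEMeasurable f μ) {s : Set α} :
    μ.withDensity (fun x => ENNReal.ofReal (f x)) s = 0 ↔ μ ({x | 0 < f x} ∩ s) = 0 := by
  simp only [withDensity_apply_eq_zero' hf.ennreal_ofReal, ne_eq, ENNReal.ofReal_eq_zero, not_le]

theorem densMeasure_apply_eq_zero {d : ℕ} {f : (Fin d → ℝ) → ℝ} (hf : Measurable f)
    {s : Set (Fin d → ℝ)} : densMeasure f s = 0 ↔ volume ({x | 0 < f x} ∩ s) = 0 :=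
  withDensity_ofReal_apply_eq_zero hf.aemeasurable

theorem cdfS_pos_iff {d : ℕ} {μ : Measure (Fin d → ℝ)} [IsFiniteMeasure μ]
    {s : (Fin d → ℝ) → ℝ} {t : ℝ} : 0 < cdfS μ s t ↔ μ {x | s x ≤ t} ≠ 0 := by
  simp [cdfS, ENNReal.toReal_pos_iff, measure_lt_top, pos_iff_ne_zero]

theorem setOf_cdfS_pos_subset {d : ℕ} {f : (Fin d → ℝ) → ℝ} (hf : Measurable f) :
    {x | 0 < cdfS (densMeasure f) f (f x)} ⊆ {x | 0 < f x} := by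
  intro x hx
  by_contra hfx
  have hnull : densMeasure f {y | f y ≤ f x} = 0 := by
    refine (densMeasure_apply_eq_zero hf).2 (measure_mono_null ?_ measure_empty)
    exact fun y ⟨hy, hyx⟩ => hfx (show 0 < f x from hy.trans_le hyx)
  simp [cdfS, hnull] at hx

theorem support_symmDiff_Zf_null_general {d : ℕ} (f : (Fin d → ℝ) → ℝ)
    (hf_meas : Measurable f)
    (hf_prob : IsProbabilityMeasure (densMeasure f)) :
    volume ({x | 0 < f x} ∆ {x | 0 < cdfS (densMeasure f) f (f x)}) = 0 := by
  rw [symmDiff_of_ge (setOf_cdfS_pos_subset hf_meas)]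
  refine measure_mono_null ?_
    ((densMeasure_apply_eq_zero hf_meas).1 (measure_setOf_measure_le_eq_zero _ f))
  rintro x ⟨hpos, hcdf⟩
  exact ⟨hpos, not_ne_iff.1 (mt cdfS_pos_iff.2 hcdf)⟩

/-- the support of the density coincides with `{x : F_f(f(x)) > 0}` up to a
Lebesgue-null set. -/
theorem support_symmDiff_Zf_null {d : ℕ} (f : (Fin d → ℝ) → ℝ)
    (hf_meas : Measurable f) (hf_nonneg : ∀ x, 0 ≤ f x)
    (hf_prob : IsProbabilityMeasure (densMeasure f))
    (hA2 : ∀ t > (0:ℝ), densMeasure f {x | f x = t} = 0) :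
    volume ({x | 0 < f x} ∆ {x | 0 < cdfS (densMeasure f) f (f x)}) = 0 :=
  support_symmDiff_Zf_null_general f hf_meas hf_prob
end
end

section
/- Let ε ∈ (0,1] and let s be a scoring function satisfying assumptions A3, A4 and A6. Then there exists a constant C > 0 such that, almost surely, for all n large enough, sup_{α ∈ [ε,1]} |F̂_s†(α) − F_s†(α)|² ≤ C (log n)/n. -/
open MeasureTheory Set Filter
open scoped ENNReal Topology symmDiff

noncomputable section

/-- `a = sup {t : F_s(t) = 0}`, the lower endpoint of the support of `s(X)`. -/
def lowPt {d : ℕ} (μ : Measure (Fin d → ℝ)) (s : (Fin d → ℝ) → ℝ) : ℝ :=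
  sSup {t | cdfS μ s t = 0}

/-- `b = inf {t : F_s(t) = 1}`, the upper endpoint of the support of `s(X)`. -/
def highPt {d : ℕ} (μ : Measure (Fin d → ℝ)) (s : (Fin d → ℝ) → ℝ) : ℝ :=
  sInf {t | cdfS μ s t = 1}

/-- Empirical mass `α̂_s(t)` based on the sample `X_1(ω), …, X_n(ω)`. -/
def alphaHat {d : ℕ} {Ω : Type*} (s : (Fin d → ℝ) → ℝ) (X : ℕ → Ω → (Fin d → ℝ))
    (n : ℕ) (ω : Ω) (t : ℝ) : ℝ :=
  (∑ i ∈ Finset.range n, if t ≤ s (X i ω) then (1:ℝ) else 0) / n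

/-- Generalized inverse of `α̂_s`. -/
def alphaHatInv {d : ℕ} {Ω : Type*} (s : (Fin d → ℝ) → ℝ) (X : ℕ → Ω → (Fin d → ℝ))
    (n : ℕ) (ω : Ω) (α : ℝ) : ℝ :=
  sInf {t | alphaHat s X n ω t ≤ α}

/-- Empirical MV curve `MV̂_s(α) = λ_s(α̂_s⁻¹(α))`. -/
def MVhat {d : ℕ} {Ω : Type*} (s : (Fin d → ℝ) → ℝ) (X : ℕ → Ω → (Fin d → ℝ))
    (n : ℕ) (ω : Ω) (α : ℝ) : ℝ :=
  lamS s (alphaHatInv s X n ω α)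

/-- Empirical cdf of `s(X_1(ω)), …, s(X_n(ω))`. -/
def cdfHat {d : ℕ} {Ω : Type*} (s : (Fin d → ℝ) → ℝ) (X : ℕ → Ω → (Fin d → ℝ))
    (n : ℕ) (ω : Ω) (t : ℝ) : ℝ :=
  (∑ i ∈ Finset.range n, if s (X i ω) ≤ t then (1:ℝ) else 0) / n

/-- Empirical quantile function `F̂_s†(u) = inf {t : F̂_s(t) ≥ u}`. -/
def quantHat {d : ℕ} {Ω : Type*} (s : (Fin d → ℝ) → ℝ) (X : ℕ → Ω → (Fin d → ℝ))
    (n : ℕ) (ω : Ω) (u : ℝ) : ℝ :=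
  sInf {t | u ≤ cdfHat s X n ω t}

/-!
Hoeffding's inequality at the `n` points `F_s†(k/n)`, combined with Borel–Cantelli, shows that
almost surely, for `n` large, `|F̂_s - F_s| < η_n = √(2 log n / n)` at all of them. Both functions
are monotone and `F_s` rises by exactly `1/n` between consecutive points, so `‖F̂_s - F_s‖_∞ ≤
η_n + 1/n`. By A4 and A6 the density `f_s` is bounded below by some `c > 0` on `[F_s†(ε/2), b)`,
so there `F_s` grows at rate at least `c`, and a uniform perturbation of `F_s` of size `η` moves its
quantiles on `[ε, 1]` by at most `η / c`. As `1/n ≤ η_n`, the squared deviation is at most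
`(2 η_n / c)² = 8 log n / (c² n)`.
-/

def quantile (F : ℝ → ℝ) (u : ℝ) : ℝ := sInf {t | u ≤ F t}

structure IsBoundedContinuousCDF (F : ℝ → ℝ) : Prop where
  monotone : Monotone F
  continuous : Continuous F
  exists_eq_zero : ∃ L, ∀ t ≤ L, F t = 0
  exists_eq_one : ∃ B, ∀ t, B ≤ t → F t = 1

lemma bddBelow_setOf_le_apply {F : ℝ → ℝ} {L u : ℝ} (hL : ∀ t ≤ L, F t = 0) (hu : 0 < u) :
    BddBelow {t | u ≤ F t} :=
  ⟨L, fun t ht => le_of_not_gt fun htL => by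
    rw [mem_ofPred_eq, hL t htL.le] at ht
    linarith⟩

namespace IsBoundedContinuousCDF

variable {F : ℝ → ℝ} (hF : IsBoundedContinuousCDF F) {u t : ℝ}
include hF

lemma bddBelow_setOf_le (hu : 0 < u) : BddBelow {t | u ≤ F t} :=
  let ⟨_, hL⟩ := hF.exists_eq_zero
  bddBelow_setOf_le_apply hL hu

lemma nonneg (t : ℝ) : 0 ≤ F t := by
  obtain ⟨L, hL⟩ := hF.exists_eq_zero
  rcases le_total t L with h | h
  · exact (hL t h).ge
  · exact (hL L le_rfl).symm.le.trans (hF.monotone h)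

lemma le_one (t : ℝ) : F t ≤ 1 := by
  obtain ⟨B, hB⟩ := hF.exists_eq_one
  exact (hF.monotone (le_max_left t B)).trans (hB _ (le_max_right t B)).le

lemma quantile_le (hu : 0 < u) (ht : u ≤ F t) : quantile F u ≤ t :=
  csInf_le (hF.bddBelow_setOf_le hu) ht

lemma apply_quantile (hu : 0 < u) (hu1 : u ≤ 1) : F (quantile F u) = u := by
  obtain ⟨B, hB⟩ := hF.exists_eq_one
  have hne : {t | u ≤ F t}.Nonempty := ⟨B, by rw [mem_ofPred_eq, hB B le_rfl]; exact hu1⟩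
  refine le_antisymm ?_
    ((isClosed_le continuous_const hF.continuous).csInf_mem hne (hF.bddBelow_setOf_le hu))
  -- below the infimum `F < u`, and `F` is continuous from the left
  refine le_of_tendsto (hF.continuous.continuousAt.tendsto.mono_left nhdsWithin_le_nhds)
    (eventually_nhdsWithin_of_forall (s := Iio (quantile F u)) fun t ht => ?_)
  exact le_of_lt (not_le.mp fun h => (not_le.mpr ht) (hF.quantile_le hu h))

lemma apply_sSup_setOf_eq_zero : F (sSup {t | F t = 0}) = 0 := by
  obtain ⟨L, hL⟩ := hF.exists_eq_zero
  obtain ⟨B, hB⟩ := hF.exists_eq_one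
  refine (isClosed_eq hF.continuous continuous_const).csSup_mem ⟨L, hL L le_rfl⟩
    ⟨B, fun t ht => le_of_not_gt fun htB => ?_⟩
  rw [mem_ofPred_eq, hB t htB.le] at ht
  exact one_ne_zero ht

lemma apply_sInf_setOf_eq_one : F (sInf {t | F t = 1}) = 1 := by
  obtain ⟨L, hL⟩ := hF.exists_eq_zero
  obtain ⟨B, hB⟩ := hF.exists_eq_one
  refine (isClosed_eq hF.continuous continuous_const).csInf_mem ⟨B, hB B le_rfl⟩
    ⟨L, fun t ht => le_of_not_gt fun htL => ?_⟩
  rw [mem_ofPred_eq, hL t htL.le] at ht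
  exact zero_ne_one ht

lemma sSup_setOf_eq_zero_lt_quantile (hu : 0 < u) (hu1 : u ≤ 1) :
    sSup {t | F t = 0} < quantile F u :=
  hF.monotone.reflect_lt (by rw [hF.apply_sSup_setOf_eq_zero, hF.apply_quantile hu hu1]; exact hu)

lemma quantile_lt_sInf_setOf_eq_one (hu : 0 < u) (hu1 : u < 1) :
    quantile F u < sInf {t | F t = 1} :=
  hF.monotone.reflect_lt <| by
    rw [hF.apply_sInf_setOf_eq_one, hF.apply_quantile hu hu1.le]; exact hu1

lemma quantile_le_sInf_setOf_eq_one (hu : 0 < u) (hu1 : u ≤ 1) :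
    quantile F u ≤ sInf {t | F t = 1} :=
  hF.quantile_le hu (by rw [hF.apply_sInf_setOf_eq_one]; exact hu1)

end IsBoundedContinuousCDF

lemma natCast_div_mem_Ioc {k n : ℕ} (hk : k ∈ Finset.Icc 1 n) : (k : ℝ) / n ∈ Ioc 0 1 := by
  rw [Finset.mem_Icc] at hk
  have hk' : (1 : ℝ) ≤ k := by exact_mod_cast hk.1
  have hn : (1 : ℝ) ≤ n := by exact_mod_cast hk.1.trans hk.2
  exact ⟨by positivity, div_le_one_of_le₀ (by exact_mod_cast hk.2) n.cast_nonneg⟩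

lemma abs_sub_le_of_abs_sub_quantile_grid_le {F G : ℝ → ℝ} {q : ℕ → ℝ} {n : ℕ} {η : ℝ}
    (hn : 0 < n) (hF0 : ∀ t, 0 ≤ F t) (hF1 : ∀ t, F t ≤ 1) (hFmono : Monotone F)
    (hG0 : ∀ t, 0 ≤ G t) (hG1 : ∀ t, G t ≤ 1) (hGmono : Monotone G)
    (hFq : ∀ k ∈ Finset.Icc 1 n, F (q k) = k / n)
    (hq_le : ∀ k ∈ Finset.Icc 1 n, ∀ t, (k : ℝ) / n ≤ F t → q k ≤ t)
    (hgrid : ∀ k ∈ Finset.Icc 1 n, |G (q k) - F (q k)| ≤ η) (t : ℝ) :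
    |G t - F t| ≤ η + 1 / n := by
  have hn' : (0 : ℝ) < n := by exact_mod_cast hn
  have hη : 0 ≤ η := (abs_nonneg _).trans (hgrid n (by simp [Nat.one_le_iff_ne_zero, hn.ne']))
  -- `t` lies in the grid cell `k / n ≤ F t < (k + 1) / n`
  set k := ⌊F t * n⌋₊
  have hk : (k : ℝ) / n ≤ F t := by
    rw [div_le_iff₀ hn']; exact Nat.floor_le (by have := hF0 t; positivity)
  have hk' : F t < k / n + 1 / n := by
    rw [← add_div, lt_div_iff₀ hn']; exact Nat.lt_floor_add_one _
  rw [abs_le]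
  constructor
  · rcases Nat.eq_zero_or_pos k with hk0 | hk1
    · rw [hk0, Nat.cast_zero, zero_div, zero_add] at hk'
      linarith [hG0 t]
    · have hmem : k ∈ Finset.Icc 1 n := Finset.mem_Icc.mpr ⟨hk1, by
        exact_mod_cast (div_le_one hn').mp (hk.trans (hF1 t))⟩
      have hGq := hGmono (hq_le k hmem t hk)
      have hgridk := (abs_le.mp (hgrid k hmem)).1
      rw [hFq k hmem] at hgridk
      linarith
  · rcases lt_or_ge k n with hkn | hkn
    · have hmem : k + 1 ∈ Finset.Icc 1 n := Finset.mem_Icc.mpr ⟨by omega, hkn⟩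
      have hFq' : F (q (k + 1)) = k / n + 1 / n := by rw [hFq _ hmem, ← add_div]; push_cast; rfl
      have hGq := hGmono (hFmono.reflect_lt (hk'.trans_eq hFq'.symm)).le
      have hgridk := (abs_le.mp (hgrid _ hmem)).2
      linarith
    · have : 1 ≤ F t := le_trans ((one_le_div hn').mpr (by exact_mod_cast hkn)) hk
      linarith [hG1 t]

lemma abs_quantile_sub_le {F G : ℝ → ℝ} {t₀ b c η α : ℝ} (hc : 0 < c) (hFmono : Monotone F)
    (hgrow : ∀ x ∈ Icc t₀ b, ∀ y ∈ Icc t₀ b, x ≤ y → c * (y - x) ≤ F y - F x)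
    (hq : quantile F α ∈ Icc t₀ b) (hFq : F (quantile F α) = α) (ht₀ : F t₀ + η < α)
    (hGF : ∀ t, |G t - F t| ≤ η) (hGb : α ≤ G b) (hG : BddBelow {t | α ≤ G t}) :
    |quantile G α - quantile F α| ≤ η / c := by
  set q := quantile F α
  have hη : 0 ≤ η := (abs_nonneg _).trans (hGF 0)
  have hηc : 0 ≤ η / c := div_nonneg hη hc.le
  rw [abs_sub_le_iff, sub_le_iff_le_add', sub_le_comm]
  constructor
  · rcases le_or_gt (q + η / c) b with hb | hb
    · have hFqη := hgrow q hq (q + η / c) ⟨by linarith [hq.1], hb⟩ (by linarith)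
      rw [add_sub_cancel_left, mul_div_cancel₀ _ hc.ne'] at hFqη
      have hGt := (abs_le.mp (hGF (q + η / c))).1
      exact csInf_le hG (show α ≤ G (q + η / c) by linarith)
    · exact (csInf_le hG hGb).trans hb.le
  · refine le_csInf (⟨b, hGb⟩ : {t | α ≤ G t}.Nonempty) fun t ht => le_of_not_gt fun htq => ?_
    have hGt := (abs_le.mp (hGF t)).2
    rw [mem_ofPred_eq] at ht
    rcases le_or_gt t₀ t with ht₀t | ht₀t
    · have hFt := hgrow t ⟨ht₀t, by linarith [hq.2]⟩ q hq (by linarith)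
      have : η < c * (q - t) := by rw [mul_comm, ← div_lt_iff₀ hc]; linarith
      linarith
    · linarith [hFmono ht₀t.le]

lemma IsBoundedContinuousCDF.abs_quantile_sub_le_of_grid {F G : ℝ → ℝ}
    (hF : IsBoundedContinuousCDF F) {ε c η L α : ℝ} {n : ℕ} (hε : 0 < ε) (hn : 0 < n)
    (hc : 0 < c) (hgrow : ∀ x ∈ Icc (quantile F (ε / 2)) (sInf {t | F t = 1}),
      ∀ y ∈ Icc (quantile F (ε / 2)) (sInf {t | F t = 1}), x ≤ y → c * (y - x) ≤ F y - F x)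
    (hGmono : Monotone G) (hG0 : ∀ t, 0 ≤ G t) (hG1 : ∀ t, G t ≤ 1)
    (hGL : ∀ t ≤ L, G t = 0) (hGb : G (sInf {t | F t = 1}) = 1)
    (hgrid : ∀ k ∈ Finset.Icc 1 n, |G (quantile F (k / n)) - F (quantile F (k / n))| ≤ η)
    (hsmall : η + 1 / n < ε / 2) (hα : α ∈ Icc ε 1) :
    |quantile G α - quantile F α| ≤ (η + 1 / n) / c := by
  obtain ⟨hαε, hα1⟩ := hα
  have hα0 : 0 < α := hε.trans_le hαε
  have hε2 : 0 < ε / 2 := half_pos hε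
  have hunif := abs_sub_le_of_abs_sub_quantile_grid_le hn hF.nonneg hF.le_one hF.monotone
    hG0 hG1 hGmono
    (fun k hk => hF.apply_quantile (natCast_div_mem_Ioc hk).1 (natCast_div_mem_Ioc hk).2)
    (fun k hk t => hF.quantile_le (natCast_div_mem_Ioc hk).1) hgrid
  exact abs_quantile_sub_le hc hF.monotone hgrow
    ⟨hF.quantile_le hε2 (by rw [hF.apply_quantile hα0 hα1]; linarith),
      hF.quantile_le_sInf_setOf_eq_one hα0 hα1⟩ (hF.apply_quantile hα0 hα1)
    (by rw [hF.apply_quantile hε2 (by linarith)]; linarith) hunif (by rw [hGb]; exact hα1)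
    (bddBelow_setOf_le_apply hGL hα0)

lemma exists_pos_le_of_tendsto_nhdsLT {g : ℝ → ℝ} {a b t₀ A : ℝ}
    (hg : ∀ t ∈ Ioo a b, ContinuousAt g t) (hpos : ∀ t ∈ Ioo a b, 0 < g t) (hA : 0 < A)
    (hlim : Tendsto g (𝓝[<] b) (𝓝 A)) (ha : a < t₀) (hb : t₀ < b) :
    ∃ c > 0, ∀ t ∈ Ico t₀ b, c ≤ g t := by
  -- `g > A / 2` on some `(t₁, b)`, and `g` attains a positive minimum on `[t₀, t₁]`
  obtain ⟨l, hl, hIoo⟩ := (mem_nhdsLT_iff_exists_Ioo_subset' hb).mp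
    (hlim.eventually (eventually_gt_nhds (half_lt_self hA)))
  set t₁ := max l t₀
  have hsub : Icc t₀ t₁ ⊆ Ioo a b := fun x hx =>
    ⟨ha.trans_le hx.1, hx.2.trans_lt (max_lt hl hb)⟩
  obtain ⟨tm, htm, hmin⟩ := isCompact_Icc.exists_isMinOn ⟨t₀, le_rfl, le_max_right _ _⟩
    fun x hx => (hg x (hsub hx)).continuousWithinAt
  refine ⟨min (g tm) (A / 2), lt_min (hpos tm (hsub htm)) (half_pos hA), fun t ht => ?_⟩
  rcases le_or_gt t t₁ with h | h
  · exact (min_le_left _ _).trans (hmin ⟨ht.1, h⟩)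
  · exact (min_le_right _ _).trans (hIoo ⟨(le_max_left _ _).trans_lt h, ht.2⟩).le

lemma mul_sub_le_sub_of_hasDerivAt {F f : ℝ → ℝ} {a b t₀ c : ℝ} (hF : Continuous F)
    (hderiv : ∀ t ∈ Ioo a b, HasDerivAt F (f t) t) (hc : ∀ t ∈ Ico t₀ b, c ≤ f t)
    (ha : a ≤ t₀) : ∀ x ∈ Icc t₀ b, ∀ y ∈ Icc t₀ b, x ≤ y → c * (y - x) ≤ F y - F x := by
  have hsub : ∀ t ∈ interior (Icc t₀ b), t ∈ Ioo a b := fun t ht => by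
    rw [interior_Icc] at ht; exact ⟨ha.trans_lt ht.1, ht.2⟩
  refine (convex_Icc t₀ b).mul_sub_le_image_sub_of_le_deriv hF.continuousOn
    (fun t ht => (hderiv t (hsub t ht)).differentiableAt.differentiableWithinAt) fun t ht => ?_
  rw [(hderiv t (hsub t ht)).deriv]
  rw [interior_Icc] at ht
  exact hc t (Ioo_subset_Ico_self ht)

section Hoeffding

open ProbabilityTheory

variable {Ω : Type*} [MeasurableSpace Ω] {P : Measure Ω} [IsProbabilityMeasure P]

lemma measureReal_le_abs_sum_div_sub_le {Y : ℕ → Ω → ℝ} (hind : iIndepFun Y P)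
    (hmeas : ∀ i, Measurable (Y i)) (hbdd : ∀ i ω, Y i ω ∈ Icc (0 : ℝ) 1) {p : ℝ}
    (hmean : ∀ i, P[Y i] = p) {n : ℕ} (hn : 0 < n) {η : ℝ} (hη : 0 ≤ η) :
    P.real {ω | η ≤ |(∑ i ∈ Finset.range n, Y i ω) / n - p|}
      ≤ 2 * Real.exp (-2 * n * η ^ 2) := by
  set Z : ℕ → Ω → ℝ := fun i ω => Y i ω - p
  have hZ : ∀ i, HasSubgaussianMGF (Z i) ((‖(1 : ℝ) - 0‖₊ / 2) ^ 2) P := fun i => by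
    simpa [Z, hmean i] using
      hasSubgaussianMGF_of_mem_Icc (μ := P) (hmeas i).aemeasurable (ae_of_all _ (hbdd i))
  have hZind : iIndepFun Z P := hind.comp (fun _ x => x - p) fun _ => measurable_sub_const p
  have hnη : 0 ≤ (n : ℝ) * η := by positivity
  have hbound : ∀ W : ℕ → Ω → ℝ, iIndepFun W P →
      (∀ i, HasSubgaussianMGF (W i) ((‖(1 : ℝ) - 0‖₊ / 2) ^ 2) P) →
      P.real {ω | n * η ≤ ∑ i ∈ Finset.range n, W i ω} ≤ Real.exp (-2 * n * η ^ 2) := by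
    intro W hW hsub
    refine (HasSubgaussianMGF.measure_sum_range_ge_le_of_iIndepFun hW (fun i _ => hsub i)
      hnη).trans_eq ?_
    have : (n : ℝ) ≠ 0 := by positivity
    congr 1
    norm_num
    field_simp
    ring
  have hsubset : {ω | η ≤ |(∑ i ∈ Finset.range n, Y i ω) / n - p|}
      ⊆ {ω | n * η ≤ ∑ i ∈ Finset.range n, Z i ω}
        ∪ {ω | n * η ≤ ∑ i ∈ Finset.range n, (-Z i) ω} := by
    intro ω hω
    have hsum : (∑ i ∈ Finset.range n, Y i ω) / n - p = (∑ i ∈ Finset.range n, Z i ω) / n := by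
      simp only [Z, Finset.sum_sub_distrib, Finset.sum_const, Finset.card_range, nsmul_eq_mul]
      field_simp
    have hn' : (0 : ℝ) < n := by exact_mod_cast hn
    simp only [mem_ofPred_eq, hsum, abs_div, Nat.abs_cast, le_div_iff₀ hn', Pi.neg_apply,
      Finset.sum_neg_distrib, mem_union] at hω ⊢
    rcases le_abs'.mp (by linarith [hω] : n * η ≤ |∑ i ∈ Finset.range n, Z i ω|) with h | h
    · right; linarith
    · left; linarith
  calc _ ≤ _ := measureReal_mono hsubset
    _ ≤ _ := measureReal_union_le _ _
    _ ≤ Real.exp (-2 * n * η ^ 2) + Real.exp (-2 * n * η ^ 2) :=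
      add_le_add (hbound Z hZind hZ)
        (hbound (fun i => -Z i) (hZind.comp (fun _ x => -x) fun _ => measurable_neg)
          fun i => (hZ i).neg)
    _ = _ := by ring

end Hoeffding

def devRate (n : ℕ) : ℝ := √(2 * Real.log n / n)

lemma devRate_sq (n : ℕ) : devRate n ^ 2 = 2 * Real.log n / n :=
  Real.sq_sqrt (by have := Real.log_natCast_nonneg n; positivity)

lemma natCast_mul_exp_devRate (n : ℕ) :
    (n : ℝ) * (2 * Real.exp (-2 * n * devRate n ^ 2)) = 2 / n ^ 3 := by
  rcases Nat.eq_zero_or_pos n with rfl | hn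
  · simp
  have hn' : (0 : ℝ) < n := by exact_mod_cast hn
  rw [devRate_sq, show -2 * (n : ℝ) * (2 * Real.log n / n) = -((4 : ℕ) * Real.log n) by
    field_simp; push_cast; ring, Real.exp_neg, ← Real.log_pow, Real.exp_log (by positivity)]
  field_simp

lemma summable_two_div_natCast_pow_three : Summable fun n : ℕ => (2 : ℝ) / n ^ 3 :=
  ((Real.summable_one_div_nat_pow (p := 3)).mpr (by norm_num)).mul_left 2 |>.congr fun n => by
    ring

lemma tendsto_devRate_atTop : Tendsto devRate atTop (𝓝 0) := by
  have h : Tendsto (fun n : ℕ => 2 * Real.log n / n) atTop (𝓝 0) := by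
    simpa [mul_div_assoc] using (Real.isLittleO_log_id_atTop.tendsto_div_nhds_zero.comp
      tendsto_natCast_atTop_atTop).const_mul 2
  rw [← Real.sqrt_zero]
  exact (Real.continuous_sqrt.tendsto 0).comp h

lemma eventually_inv_le_devRate : ∀ᶠ n : ℕ in atTop, 1 / (n : ℝ) ≤ devRate n := by
  filter_upwards [eventually_ge_atTop 2] with n hn
  have hn' : (2 : ℝ) ≤ n := by exact_mod_cast hn
  have hlog : 1 / 2 < Real.log n :=
    (by linarith [Real.log_two_gt_d9] : (1 : ℝ) / 2 < Real.log 2).trans_le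
      (Real.log_le_log (by norm_num) hn')
  rw [devRate, Real.le_sqrt (by positivity) (by positivity), div_pow, one_pow,
    div_le_div_iff₀ (by positivity) (by positivity)]
  nlinarith

lemma ae_eventually_notMem_of_measureReal_le {Ω : Type*} [MeasurableSpace Ω] {P : Measure Ω}
    [IsFiniteMeasure P] {E : ℕ → Set Ω} {g : ℕ → ℝ} (hg : Summable g)
    (hE : ∀ n, P.real (E n) ≤ g n) : ∀ᵐ ω ∂P, ∀ᶠ n in atTop, ω ∉ E n := by
  refine ae_eventually_notMem (ne_top_of_le_ne_top (ENNReal.ofReal_ne_top (r := ∑' n, g n)) ?_)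
  rw [ENNReal.ofReal_tsum_of_nonneg (fun n => measureReal_nonneg.trans (hE n)) hg]
  exact ENNReal.tsum_le_tsum fun n =>
    (ofReal_measureReal).symm.le.trans (ENNReal.ofReal_le_ofReal (hE n))

section EmpiricalCDF

variable {d : ℕ} {Ω : Type*} {s : (Fin d → ℝ) → ℝ}
  {X : ℕ → Ω → (Fin d → ℝ)} {n : ℕ} {ω : Ω}

lemma isBoundedContinuousCDF_cdfS {μ : Measure (Fin d → ℝ)} [IsProbabilityMeasure μ]
    (hs : ∀ x, 0 ≤ s x) (hB : ∃ B, ∀ x, s x ≤ B) (hcont : Continuous (cdfS μ s)) :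
    IsBoundedContinuousCDF (cdfS μ s) where
  monotone _ _ htu := ENNReal.toReal_mono (measure_ne_top _ _)
    (measure_mono fun _ hx => le_trans hx htu)
  continuous := hcont
  exists_eq_zero := ⟨-1, fun t ht => by
    rw [cdfS, show {x | s x ≤ t} = ∅ from
      eq_empty_of_forall_notMem fun x hx => by linarith [hs x, hx.trans ht]]
    simp⟩
  exists_eq_one := hB.imp fun B hB t ht => by
    rw [cdfS, show {x | s x ≤ t} = univ from eq_univ_of_forall fun x => (hB x).trans ht]
    simp

lemma monotone_cdfHat : Monotone (cdfHat s X n ω) := fun t u htu => by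
  unfold cdfHat
  gcongr with i
  split_ifs with h h' <;> first | exact absurd (h.trans htu) h' | norm_num

lemma cdfHat_nonneg (t : ℝ) : 0 ≤ cdfHat s X n ω t := by
  unfold cdfHat
  positivity

lemma cdfHat_le_one (t : ℝ) : cdfHat s X n ω t ≤ 1 := by
  refine div_le_one_of_le₀ ?_ n.cast_nonneg
  calc _ ≤ ∑ i ∈ Finset.range n, (1 : ℝ) := Finset.sum_le_sum fun i _ => by split_ifs <;> norm_num
    _ = n := by simp

lemma cdfHat_eq_one (hn : 0 < n) {t : ℝ} (h : ∀ i, s (X i ω) ≤ t) : cdfHat s X n ω t = 1 := by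
  simp [cdfHat, h, hn.ne']

lemma cdfHat_eq_zero (hs : ∀ x, 0 ≤ s x) {t : ℝ} (ht : t < 0) : cdfHat s X n ω t = 0 := by
  simp [cdfHat, fun i => (by linarith [hs (X i ω)] : ¬ s (X i ω) ≤ t)]

variable [MeasurableSpace Ω] {P : Measure Ω} {μ : Measure (Fin d → ℝ)}

lemma integral_ite_le_eq_cdfS (hs : Measurable s) {i : ℕ} (hXi : Measurable (X i))
    (hlaw : Measure.map (X i) P = μ) (t : ℝ) :
    ∫ ω, (if s (X i ω) ≤ t then (1 : ℝ) else 0) ∂P = cdfS μ s t := by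
  have hS : MeasurableSet {x | s x ≤ t} := measurableSet_le hs measurable_const
  calc _ = ∫ ω, (X i ⁻¹' {x | s x ≤ t}).indicator 1 ω ∂P := by
        congr with ω
    _ = (Measure.map (X i) P).real {x | s x ≤ t} := by
        rw [integral_indicator_one (hXi hS), map_measureReal_apply hXi hS]
    _ = cdfS μ s t := by rw [hlaw]; rfl

lemma measureReal_le_abs_cdfHat_sub_le [IsProbabilityMeasure P] (hs : Measurable s)
    (hX : ∀ i, Measurable (X i)) (hlaw : ∀ i, Measure.map (X i) P = μ) (hind : ProbabilityTheory.iIndepFun X P)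
    (hn : 0 < n) {η : ℝ} (hη : 0 ≤ η) (t : ℝ) :
    P.real {ω | η ≤ |cdfHat s X n ω t - cdfS μ s t|} ≤ 2 * Real.exp (-2 * n * η ^ 2) :=
  measureReal_le_abs_sum_div_sub_le
    (hind.comp (fun _ x => if s x ≤ t then (1 : ℝ) else 0) fun _ =>
      Measurable.ite (measurableSet_le hs measurable_const) measurable_const measurable_const)
    (fun i => Measurable.ite (measurableSet_le (hs.comp (hX i)) measurable_const)
      measurable_const measurable_const)
    (fun i ω => by simp only [Function.comp_apply]; split_ifs <;> norm_num)
    (fun i => integral_ite_le_eq_cdfS hs (hX i) (hlaw i) t) hn hη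

lemma ae_eventually_abs_cdfHat_sub_lt_devRate [IsProbabilityMeasure P] (hs : Measurable s)
    (hX : ∀ i, Measurable (X i)) (hlaw : ∀ i, Measure.map (X i) P = μ)
    (hind : ProbabilityTheory.iIndepFun X P) (t : ℕ → ℕ → ℝ) :
    ∀ᵐ ω ∂P, ∀ᶠ n in atTop, ∀ k ∈ Finset.Icc 1 n,
      |cdfHat s X n ω (t n k) - cdfS μ s (t n k)| < devRate n := by
  set E : ℕ → Set Ω := fun n =>
    ⋃ k ∈ Finset.Icc 1 n, {ω | devRate n ≤ |cdfHat s X n ω (t n k) - cdfS μ s (t n k)|}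
  have hE : ∀ n, P.real (E n) ≤ 2 / n ^ 3 := fun n => by
    rw [← natCast_mul_exp_devRate]
    calc _ ≤ _ := measureReal_biUnion_finset_le _ _
      _ ≤ ∑ k ∈ Finset.Icc 1 n, 2 * Real.exp (-2 * n * devRate n ^ 2) :=
          Finset.sum_le_sum fun k hk => measureReal_le_abs_cdfHat_sub_le hs hX hlaw hind
            (by rw [Finset.mem_Icc] at hk; omega) (Real.sqrt_nonneg _) _
      _ = _ := by simp
  filter_upwards [ae_eventually_notMem_of_measureReal_le summable_two_div_natCast_pow_three hE]
    with ω hω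
  filter_upwards [hω] with n hn k hk
  simp only [E, mem_iUnion, mem_ofPred_eq, not_exists, not_le] at hn
  exact hn k hk

lemma ae_forall_le_of_cdfS_eq_one [IsProbabilityMeasure μ] (hs : Measurable s)
    (hX : ∀ i, Measurable (X i)) (hlaw : ∀ i, Measure.map (X i) P = μ) {b : ℝ}
    (hb : cdfS μ s b = 1) : ∀ᵐ ω ∂P, ∀ i, s (X i ω) ≤ b := by
  have hS : MeasurableSet {x | s x ≤ b} := measurableSet_le hs measurable_const
  have hμ : ∀ᵐ x ∂μ, s x ≤ b := by
    rw [ae_iff, show {x | ¬ s x ≤ b} = {x | s x ≤ b}ᶜ from rfl, prob_compl_eq_zero_iff hS]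
    exact (ENNReal.toReal_eq_one_iff _).mp hb
  exact ae_all_iff.mpr fun i => ae_of_ae_map (hX i).aemeasurable (by rwa [hlaw i])

end EmpiricalCDF

theorem empirical_quantile_sq_rate_general {d : ℕ} {Ω : Type*} [MeasurableSpace Ω]
    (ℙ : Measure Ω) [IsProbabilityMeasure ℙ]
    (f : (Fin d → ℝ) → ℝ)
    (hf_prob : IsProbabilityMeasure (densMeasure f))
    (X : ℕ → Ω → (Fin d → ℝ)) (hX_meas : ∀ i, Measurable (X i))
    (hX_law : ∀ i, Measure.map (X i) ℙ = densMeasure f)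
    (hX_indep : ProbabilityTheory.iIndepFun X ℙ)
    (s : (Fin d → ℝ) → ℝ) (hs : IsScoring s)
    -- A3: `s` is bounded
    (hA3 : ∃ B, ∀ x, s x ≤ B)
    -- A4: `F_s` is continuous, twice differentiable on `(a,b)` with positive derivative `f_s`
    (hFs_cont : Continuous (cdfS (densMeasure f) s))
    (fs : ℝ → ℝ)
    (hfs : ∀ t ∈ Ioo (lowPt (densMeasure f) s) (highPt (densMeasure f) s),
      HasDerivAt (cdfS (densMeasure f) s) (fs t) t)
    (hfs' : ∃ fs' : ℝ → ℝ, ∀ t ∈ Ioo (lowPt (densMeasure f) s) (highPt (densMeasure f) s),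
      HasDerivAt fs (fs' t) t)
    (hfs_pos : ∀ t ∈ Ioo (lowPt (densMeasure f) s) (highPt (densMeasure f) s), 0 < fs t)
    -- A6: `f_s` has a positive finite limit at `b⁻`
    (hA6 : ∃ A : ℝ, 0 < A ∧ Tendsto fs (𝓝[<] (highPt (densMeasure f) s)) (𝓝 A))
    (ε : ℝ) (hε : ε ∈ Ioc (0:ℝ) 1) :
    ∃ C > (0:ℝ), ∀ᵐ ω ∂ℙ, ∀ᶠ n : ℕ in atTop, ∀ α ∈ Icc ε 1,
      |quantHat s X n ω α - quantS (densMeasure f) s α|^2 ≤ C * Real.log n / n := by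
  obtain ⟨hs_meas, hs_nonneg, -⟩ := hs
  obtain ⟨fs', hfs'⟩ := hfs'
  obtain ⟨A, hA, hlim⟩ := hA6
  obtain ⟨hε0, hε1⟩ := hε
  set μ := densMeasure f
  have hF := isBoundedContinuousCDF_cdfS hs_nonneg hA3 hFs_cont
  have hε2 : 0 < ε / 2 := half_pos hε0
  have ht₀ := hF.sSup_setOf_eq_zero_lt_quantile hε2 (by linarith)
  obtain ⟨c, hc, hfs_ge⟩ := exists_pos_le_of_tendsto_nhdsLT
    (fun t ht => (hfs' t ht).continuousAt) hfs_pos hA hlim ht₀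
    (hF.quantile_lt_sInf_setOf_eq_one hε2 (by linarith))
  have hgrow := mul_sub_le_sub_of_hasDerivAt hFs_cont hfs hfs_ge ht₀.le
  refine ⟨8 / c ^ 2, by positivity, ?_⟩
  filter_upwards [ae_eventually_abs_cdfHat_sub_lt_devRate hs_meas hX_meas hX_law hX_indep
      fun n k => quantile (cdfS μ s) (k / n),
    ae_forall_le_of_cdfS_eq_one hs_meas hX_meas hX_law hF.apply_sInf_setOf_eq_one]
    with ω hgrid hb
  filter_upwards [hgrid, (tendsto_devRate_atTop.add tendsto_one_div_atTop_nhds_zero_nat).eventually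
      (gt_mem_nhds (by linarith : (0 : ℝ) + 0 < ε / 2)), eventually_inv_le_devRate,
      eventually_gt_atTop 0] with n hgrid_n hsmall hinv hn α hα
  have hdev : |quantHat s X n ω α - quantS μ s α| ≤ 2 * devRate n / c :=
    (hF.abs_quantile_sub_le_of_grid hε0 hn hc hgrow monotone_cdfHat cdfHat_nonneg cdfHat_le_one
      (L := -1) (fun t ht => cdfHat_eq_zero hs_nonneg (by linarith)) (cdfHat_eq_one hn hb)
      (fun k hk => (hgrid_n k hk).le) hsmall hα).trans (by gcongr; linarith)
  calc _ ≤ (2 * devRate n / c) ^ 2 := pow_le_pow_left₀ (abs_nonneg _) hdev 2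
    _ = 8 / c ^ 2 * Real.log n / n := by rw [div_pow, mul_pow, devRate_sq]; ring

/-- almost sure uniform rate `(log n)/n` for the squared deviation of the
empirical quantile function on `[ε,1]`. -/
theorem empirical_quantile_sq_rate {d : ℕ} {Ω : Type*} [MeasurableSpace Ω]
    (ℙ : Measure Ω) [IsProbabilityMeasure ℙ]
    (f : (Fin d → ℝ) → ℝ) (hf_meas : Measurable f) (hf_nonneg : ∀ x, 0 ≤ f x)
    (hf_prob : IsProbabilityMeasure (densMeasure f))
    (X : ℕ → Ω → (Fin d → ℝ)) (hX_meas : ∀ i, Measurable (X i))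
    (hX_law : ∀ i, Measure.map (X i) ℙ = densMeasure f)
    (hX_indep : ProbabilityTheory.iIndepFun X ℙ)
    (s : (Fin d → ℝ) → ℝ) (hs : IsScoring s)
    -- A3: `s` is bounded
    (hA3 : ∃ B, ∀ x, s x ≤ B)
    -- A4: `F_s` is continuous, twice differentiable on `(a,b)` with positive derivative `f_s`
    (hFs_cont : Continuous (cdfS (densMeasure f) s))
    (fs : ℝ → ℝ)
    (hfs : ∀ t ∈ Ioo (lowPt (densMeasure f) s) (highPt (densMeasure f) s),
      HasDerivAt (cdfS (densMeasure f) s) (fs t) t)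
    (hfs' : ∃ fs' : ℝ → ℝ, ∀ t ∈ Ioo (lowPt (densMeasure f) s) (highPt (densMeasure f) s),
      HasDerivAt fs (fs' t) t)
    (hfs_pos : ∀ t ∈ Ioo (lowPt (densMeasure f) s) (highPt (densMeasure f) s), 0 < fs t)
    -- A6: `f_s` has a positive finite limit at `b⁻`
    (hA6 : ∃ A : ℝ, 0 < A ∧ Tendsto fs (𝓝[<] (highPt (densMeasure f) s)) (𝓝 A))
    (ε : ℝ) (hε : ε ∈ Ioc (0:ℝ) 1) :
    ∃ C > (0:ℝ), ∀ᵐ ω ∂ℙ, ∀ᶠ n : ℕ in atTop, ∀ α ∈ Icc ε 1,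
      |quantHat s X n ω α - quantS (densMeasure f) s α|^2 ≤ C * Real.log n / n :=
  empirical_quantile_sq_rate_general ℙ f hf_prob X hX_meas hX_law hX_indep s hs hA3 hFs_cont fs hfs
    hfs' hfs_pos hA6 ε hε
end
end
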